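/- Let A = {v₁,…,v_{d+2}} ⊆ ℤ^d be a set of d+2 points with A − A generating ℤ^d additively, and suppose λ₁,…,λ_{d+2} ∈ ℤ, not all zero, satisfy λ₁ṽ₁ + ⋯ + λ_{d+2}ṽ_{d+2} = 0 in ℤ^{d+1} with λᵢ equal (up to sign) to the cofactor determinants det of the lifts omitting ṽᵢ. Let P = {i : λᵢ > 0}. Then for every h ∈ ℕ, every element w of the h-fold sumset hA has exactly one representation w = α₁v₁ + ⋯ + α_{d+2}v_{d+2} with αᵢ ∈ ℕ, α₁+⋯+α_{d+2} = h, and αᵢ < λᵢ for at least one i ∈ P. Consequently |hA| equals the number of tuples (α₁,…,α_{d+2}) ∈ ℕ^{d+2} with α₁+⋯+α_{d+2} = h for which αᵢ < λᵢ for some i ∈ P. -/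

import Mathlib

open Pointwise

/-- The lift of `v ∈ ℤ^d` to `ṽ = (v, 1) ∈ ℤ^{d+1}`. -/
def liftZ {d : ℕ} (u : Fin d → ℤ) : Fin (d + 1) → ℤ := Fin.snoc u 1

/-- The `h`-fold sumset `hA = {a₁ + ⋯ + a_h : aᵢ ∈ A}` (with `0A = {0}`). -/
def hFoldSumset {d : ℕ} (A : Set (Fin d → ℤ)) (h : ℕ) : Set (Fin d → ℤ) :=
  {x | ∃ f : Fin h → (Fin d → ℤ), (∀ i, f i ∈ A) ∧ ∑ i, f i = x}

/-!
Two representations of the same point of `hA` differ by an integer relation among the lifts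
`ṽᵢ`. Since the differences `vᵢ - vⱼ` generate `ℤ^d`, the lifts generate `ℤ^{d+1}`; reducing
mod a prime `p`, some `d + 1` of them still span, so `p` misses one of the maximal minors `±λᵢ`.
Thus `gcd λᵢ = 1`, and as a nonzero minor leaves only a rank-one module of relations, every
relation is `tλ` with `t ∈ ℤ`. Shifting a representation by `tλ` with `t ≠ 0` makes a coefficient
negative if both are reduced, which gives uniqueness; taking the least `t` with `β + tλ ≥ 0`
makes any representation `β` reduced.
-/

theorem mem_hFoldSumset_range_iff {d m h : ℕ} (v : Fin m → Fin d → ℤ) (x : Fin d → ℤ) :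
    x ∈ hFoldSumset (Set.range v) h ↔
      ∃ β : Fin m → ℕ, ∑ i, β i = h ∧ ∑ i, (β i : ℤ) • v i = x := by
  classical
  constructor
  · rintro ⟨f, hf, rfl⟩
    choose g hg using hf
    refine ⟨fun i => Fintype.card {j // g j = i}, ?_, ?_⟩
    · simpa using Fintype.sum_fiberwise' g (fun _ => (1 : ℕ))
    · simp_rw [natCast_zsmul, ← hg, ← Fintype.sum_fiberwise' g v, Finset.sum_const,
        Finset.card_univ]
  · rintro ⟨β, rfl, rfl⟩
    refine ⟨fun j => v (finSigmaFinEquiv.symm j).1, fun j => ⟨_, rfl⟩, ?_⟩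
    rw [finSigmaFinEquiv.symm.sum_comp (fun σ => v σ.1), Fintype.sum_sigma]
    simp

theorem exists_sum_eq_zero_of_mem_closure_sub {ι M : Type*} [Fintype ι] [AddCommGroup M]
    (v : ι → M) {x : M} (hx : x ∈ AddSubgroup.closure (Set.range v - Set.range v)) :
    ∃ μ : ι → ℤ, ∑ i, μ i = 0 ∧ ∑ i, μ i • v i = x := by
  classical
  induction hx using AddSubgroup.closure_induction with
  | mem _ hx =>
    obtain ⟨_, ⟨i, rfl⟩, _, ⟨j, rfl⟩, rfl⟩ := hx
    exact ⟨Pi.single i 1 - Pi.single j 1, by simp [Finset.sum_sub_distrib],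
      by simp [sub_smul, Finset.sum_sub_distrib]⟩
  | zero => exact ⟨0, by simp, by simp⟩
  | add _ _ _ _ hx hy =>
    obtain ⟨μ, hμ, rfl⟩ := hx
    obtain ⟨ν, hν, rfl⟩ := hy
    exact ⟨μ + ν, by simp [Finset.sum_add_distrib, hμ, hν],
      by simp [add_smul, Finset.sum_add_distrib]⟩
  | neg _ _ hx =>
    obtain ⟨μ, hμ, rfl⟩ := hx
    exact ⟨-μ, by simp [hμ], by simp [neg_smul]⟩

section Lift

variable {ι : Type*} [Fintype ι] {d : ℕ}

theorem sum_smul_liftZ (μ : ι → ℤ) (v : ι → Fin d → ℤ) :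
    ∑ i, μ i • liftZ (v i) = Fin.snoc (∑ i, μ i • v i) (∑ i, μ i) := by
  funext r
  refine Fin.lastCases ?_ (fun r => ?_) r <;> simp [liftZ, Finset.sum_apply]

theorem sum_smul_liftZ_eq_zero_iff (μ : ι → ℤ) (v : ι → Fin d → ℤ) :
    ∑ i, μ i • liftZ (v i) = 0 ↔ ∑ i, μ i = 0 ∧ ∑ i, μ i • v i = 0 := by
  rw [sum_smul_liftZ]
  refine ⟨fun h => ⟨by simpa using congrFun h (Fin.last d),
    funext fun r => by simpa using congrFun h r.castSucc⟩, fun ⟨h₁, h₂⟩ => ?_⟩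
  rw [h₁, h₂]
  funext r
  refine Fin.lastCases ?_ (fun r => ?_) r <;> simp

theorem exists_sum_smul_liftZ_eq [Nonempty ι] (v : ι → Fin d → ℤ)
    (hgen : AddSubgroup.closure (Set.range v - Set.range v) = ⊤) (u : Fin (d + 1) → ℤ) :
    ∃ μ : ι → ℤ, ∑ i, μ i • liftZ (v i) = u := by
  classical
  obtain ⟨i₀⟩ := ‹Nonempty ι›
  set a := u (Fin.last d)
  obtain ⟨μ, hμ, hμv⟩ := exists_sum_eq_zero_of_mem_closure_sub v
    (hgen ▸ AddSubgroup.mem_top (Fin.init u - a • v i₀))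
  refine ⟨μ + Pi.single i₀ a, ?_⟩
  have hsum : ∑ i, (μ + Pi.single i₀ a : ι → ℤ) i = a := by
    simp [Finset.sum_add_distrib, hμ]
  have hcomb : ∑ i, (μ + Pi.single i₀ a : ι → ℤ) i • v i = Fin.init u := by
    simp only [Pi.add_apply, add_smul, Finset.sum_add_distrib, hμv, Pi.single_apply, ite_smul,
      zero_smul, Finset.sum_ite_eq', Finset.mem_univ, if_true, sub_add_cancel]
  rw [sum_smul_liftZ, hsum, hcomb, Fin.snoc_init_self]

end Lift

theorem exists_sum_mul_eq_one_of_forall_not_dvd {ι : Type*} [Fintype ι] (lam : ι → ℤ)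
    (h : ∀ p : ℕ, p.Prime → ∃ i, ¬ (p : ℤ) ∣ lam i) : ∃ c : ι → ℤ, ∑ i, c i * lam i = 1 := by
  set g := Finset.univ.gcd lam
  obtain ⟨f, hf⟩ := Finset.univ.gcd_eq_sum_mul lam
  have hg : g.natAbs = 1 := by
    by_contra hne
    obtain ⟨p, hp, hpg⟩ := Nat.exists_prime_and_dvd hne
    obtain ⟨i, hi⟩ := h p hp
    exact hi ((Int.natCast_dvd.mpr hpg).trans (Finset.gcd_dvd (Finset.mem_univ i)))
  refine ⟨fun i => g * f i, ?_⟩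
  calc ∑ i, g * f i * lam i = g * ∑ i, lam i * f i := by
        rw [Finset.mul_sum]
        exact Finset.sum_congr rfl fun i _ => by ring
    _ = 1 := by
        rw [← hf]
        simpa using Int.natAbs_eq_iff_mul_self_eq.mp (hg.trans Int.natAbs_one.symm)

section Cofactors

variable {n : ℕ}

abbrev colsExcept {R : Type*} (w : Fin (n + 1) → Fin n → R) (i : Fin (n + 1)) :
    Matrix (Fin n) (Fin n) R :=
  Matrix.of fun r c => w (i.succAbove c) r

theorem eq_zero_of_sum_smul_eq_zero_of_det_ne_zero {R : Type*} [CommRing R] [IsDomain R]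
    (w : Fin (n + 1) → Fin n → R) {i : Fin (n + 1)}
    (hdet : (colsExcept w i).det ≠ 0) {ν : Fin (n + 1) → R}
    (hν : ∑ j, ν j • w j = 0) (hνi : ν i = 0) : ν = 0 := by
  have hmul : (colsExcept w i).mulVec (fun c => ν (i.succAbove c)) = 0 := by
    rw [Fin.sum_univ_succAbove _ i, hνi, zero_smul, zero_add] at hν
    funext r
    simpa [Matrix.mulVec, dotProduct, mul_comm] using congrFun hν r
  have hrest : (fun c => ν (i.succAbove c)) = 0 := by
    by_contra hne
    exact hdet (Matrix.exists_mulVec_eq_zero_iff.mp ⟨_, hne, hmul⟩)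
  funext j
  exact Fin.succAboveCases i hνi (fun c => congrFun hrest c) j

theorem eq_smul_of_sum_smul_eq_zero {R : Type*} [CommRing R] [IsDomain R]
    (w : Fin (n + 1) → Fin n → R) {lam : Fin (n + 1) → R} {i : Fin (n + 1)} (hi : lam i ≠ 0)
    (hdet : (colsExcept w i).det ≠ 0)
    (hlam : ∑ j, lam j • w j = 0) {c : Fin (n + 1) → R} (hc : ∑ j, c j * lam j = 1)
    {μ : Fin (n + 1) → R} (hμ : ∑ j, μ j • w j = 0) : μ = (∑ j, c j * μ j) • lam := by
  have hcross : ∀ j, lam i * μ j = μ i * lam j := by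
    have hν : ∑ j, (lam i • μ - μ i • lam) j • w j = 0 := by
      simp only [Pi.sub_apply, Pi.smul_apply, smul_eq_mul, sub_smul, mul_smul,
        Finset.sum_sub_distrib, ← Finset.smul_sum, hμ, hlam, smul_zero, sub_zero]
    have := eq_zero_of_sum_smul_eq_zero_of_det_ne_zero w hdet hν (by simp [mul_comm])
    exact fun j => sub_eq_zero.mp (congrFun this j)
  have hμi : μ i = lam i * ∑ j, c j * μ j := calc
    μ i = μ i * ∑ j, c j * lam j := by rw [hc, mul_one]
    _ = lam i * ∑ j, c j * μ j := by
      simp only [Finset.mul_sum]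
      exact Finset.sum_congr rfl fun j _ => by linear_combination c j * (hcross j).symm
  funext j
  apply mul_left_cancel₀ hi
  rw [hcross j, hμi, Pi.smul_apply, smul_eq_mul]
  ring

theorem exists_det_ne_zero_of_span_eq_top {K : Type*} [Field K] (w : Fin (n + 1) → Fin n → K)
    (hw : Submodule.span K (Set.range w) = ⊤) :
    ∃ i : Fin (n + 1), (colsExcept w i).det ≠ 0 := by
  have hdep : ¬ LinearIndependent K w := fun hli => by
    simpa using hli.fintype_card_le_finrank
  obtain ⟨g, hg, i, hgi⟩ := Fintype.not_linearIndependent_iff.mp hdep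
  refine ⟨i, ?_⟩
  have hspan : ⊤ ≤ Submodule.span K (Set.range fun c => w (i.succAbove c)) := by
    rw [← hw, Submodule.span_le]
    rintro _ ⟨j, rfl⟩
    refine Fin.succAboveCases i ?_ (fun c => Submodule.subset_span ⟨c, rfl⟩) j
    rw [Fin.sum_univ_succAbove _ i] at hg
    rw [← inv_smul_smul₀ hgi (w i), eq_neg_of_add_eq_zero_left hg]
    exact Submodule.smul_mem _ _ (Submodule.neg_mem _ (Submodule.sum_mem _ fun c _ =>
      Submodule.smul_mem _ _ (Submodule.subset_span ⟨c, rfl⟩)))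
  have hli : LinearIndependent K (colsExcept w i).col :=
    linearIndependent_of_top_le_span_of_card_eq_finrank hspan (by simp)
  exact ((Matrix.isUnit_iff_isUnit_det _).mp
    (Matrix.linearIndependent_cols_iff_isUnit.mp hli)).ne_zero

theorem span_range_intCast_eq_top {ι : Type*} [Fintype ι] (K : Type*) [Ring K]
    (w : ι → Fin n → ℤ) (hw : ∀ y, ∃ μ : ι → ℤ, ∑ i, μ i • w i = y) :
    Submodule.span K (Set.range fun i r => (w i r : K)) = ⊤ := by
  set φ : (Fin n → ℤ) →+ (Fin n → K) := (Int.castAddHom K).compLeft (Fin n)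
  have hmem : ∀ y, φ y ∈ Submodule.span K (Set.range fun i r => (w i r : K)) := by
    intro y
    obtain ⟨μ, rfl⟩ := hw y
    rw [map_sum]
    exact Submodule.sum_mem _ fun i _ => by
      rw [map_zsmul]
      exact Submodule.smul_of_tower_mem _ _ (Submodule.subset_span ⟨i, rfl⟩)
  rw [eq_top_iff, ← (Pi.basisFun K (Fin n)).span_eq, Submodule.span_le]
  rintro _ ⟨r, rfl⟩
  have hr : Pi.basisFun K (Fin n) r = φ (Pi.single r 1) := by
    funext s
    simp [φ, Pi.single_apply]
  rw [SetLike.mem_coe, hr]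
  exact hmem _

theorem exists_not_dvd_det (w : Fin (n + 1) → Fin n → ℤ)
    (hw : ∀ y, ∃ μ : Fin (n + 1) → ℤ, ∑ i, μ i • w i = y) (p : ℕ) [Fact p.Prime] :
    ∃ i : Fin (n + 1), ¬ (p : ℤ) ∣ (colsExcept w i).det := by
  obtain ⟨i, hi⟩ :=
    exists_det_ne_zero_of_span_eq_top _ (span_range_intCast_eq_top (ZMod p) w hw)
  refine ⟨i, fun hdvd => hi ?_⟩
  rw [← (ZMod.intCast_zmod_eq_zero_iff_dvd _ _).mpr hdvd]
  exact ((Int.castRingHom (ZMod p)).map_det _).symm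

theorem exists_eq_smul_of_sum_smul_eq_zero (w : Fin (n + 1) → Fin n → ℤ)
    (hw : ∀ y, ∃ μ : Fin (n + 1) → ℤ, ∑ i, μ i • w i = y) {lam : Fin (n + 1) → ℤ}
    (hne : lam ≠ 0) (hlam : ∑ i, lam i • w i = 0)
    (hcof : ∀ i, (lam i).natAbs = (colsExcept w i).det.natAbs)
    {μ : Fin (n + 1) → ℤ} (hμ : ∑ i, μ i • w i = 0) : ∃ t : ℤ, μ = t • lam := by
  obtain ⟨c, hc⟩ := exists_sum_mul_eq_one_of_forall_not_dvd lam fun p hp => by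
    have := Fact.mk hp
    obtain ⟨i, hi⟩ := exists_not_dvd_det w hw p
    exact ⟨i, by rwa [Int.natCast_dvd, hcof, ← Int.natCast_dvd]⟩
  obtain ⟨i, hi⟩ := Function.ne_iff.mp hne
  have hdet : (colsExcept w i).det ≠ 0 := by
    rw [← Int.natAbs_ne_zero, ← hcof]
    exact Int.natAbs_ne_zero.mpr hi
  exact ⟨_, eq_smul_of_sum_smul_eq_zero w hi hdet hlam hc hμ⟩

end Cofactors

section Reduced

variable {ι : Type*} {lam : ι → ℤ}

def IsReducedBy (lam : ι → ℤ) (α : ι → ℕ) : Prop := ∃ i, 0 < lam i ∧ (α i : ℤ) < lam i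

theorem exists_isReducedBy_add_mul (hpos : ∃ i, 0 < lam i) (β : ι → ℕ) :
    ∃ (α : ι → ℕ) (t : ℤ), (∀ i, (α i : ℤ) = β i + t * lam i) ∧ IsReducedBy lam α := by
  obtain ⟨i₀, hi₀⟩ := hpos
  have hbdd : ∃ b : ℤ, ∀ t : ℤ, (∀ i, 0 ≤ (β i : ℤ) + t * lam i) → b ≤ t :=
    ⟨-β i₀, fun t ht => by nlinarith [ht i₀]⟩
  obtain ⟨t, ht, hmin⟩ := Int.exists_least_of_bdd hbdd ⟨0, fun i => by simp⟩
  obtain ⟨i, hi⟩ : ∃ i, (β i : ℤ) + (t - 1) * lam i < 0 := by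
    by_contra! h
    linarith [hmin (t - 1) h]
  refine ⟨fun i => ((β i : ℤ) + t * lam i).toNat, t, fun i => Int.toNat_of_nonneg (ht i),
    i, ?_, ?_⟩
  · nlinarith [ht i]
  · rw [Int.toNat_of_nonneg (ht i)]
    linarith

theorem eq_of_isReducedBy_of_sub_eq_mul {α α' : ι → ℕ} (hα : IsReducedBy lam α)
    (hα' : IsReducedBy lam α') {t : ℤ} (h : ∀ i, (α i : ℤ) - α' i = t * lam i) : α = α' := by
  rcases lt_trichotomy t 0 with ht | rfl | ht
  · obtain ⟨i, hi, hα'i⟩ := hα'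
    nlinarith [h i, Int.natCast_nonneg (α i),
      mul_le_mul_of_nonneg_right (show t ≤ -1 by omega) hi.le]
  · funext i
    exact_mod_cast sub_eq_zero.mp ((h i).trans (zero_mul _))
  · obtain ⟨i, hi, hαi⟩ := hα
    nlinarith [h i, Int.natCast_nonneg (α' i),
      mul_le_mul_of_nonneg_right (show 1 ≤ t by omega) hi.le]

end Reduced

theorem bijOn_sum_smul_isReducedBy {d m : ℕ} (v : Fin m → Fin d → ℤ) {lam : Fin m → ℤ}
    (hpos : ∃ i, 0 < lam i) (hsum : ∑ i, lam i = 0) (hcomb : ∑ i, lam i • v i = 0)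
    (hker : ∀ μ : Fin m → ℤ, ∑ i, μ i = 0 → ∑ i, μ i • v i = 0 → ∃ t : ℤ, μ = t • lam) (h : ℕ) :
    Set.BijOn (fun α : Fin m → ℕ => ∑ i, (α i : ℤ) • v i)
      {α | ∑ i, α i = h ∧ IsReducedBy lam α} (hFoldSumset (Set.range v) h) := by
  refine ⟨fun α hα => (mem_hFoldSumset_range_iff v _).2 ⟨α, hα.1, rfl⟩, ?_, ?_⟩
  · rintro α ⟨hαh, hα⟩ α' ⟨hα'h, hα'⟩ heq
    have hμsum : ∑ i, ((α i : ℤ) - α' i) = 0 := by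
      rw [Finset.sum_sub_distrib, sub_eq_zero]
      exact_mod_cast hαh.trans hα'h.symm
    have hμcomb : ∑ i, ((α i : ℤ) - α' i) • v i = 0 := by
      simpa [sub_smul, Finset.sum_sub_distrib, sub_eq_zero] using heq
    obtain ⟨t, ht⟩ := hker _ hμsum hμcomb
    exact eq_of_isReducedBy_of_sub_eq_mul hα hα' fun i => congrFun ht i
  · intro x hx
    obtain ⟨β, rfl, rfl⟩ := (mem_hFoldSumset_range_iff v x).1 hx
    obtain ⟨α, t, hαβ, hα⟩ := exists_isReducedBy_add_mul hpos β
    refine ⟨α, ⟨?_, hα⟩, ?_⟩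
    · have : (∑ i, α i : ℤ) = ∑ i, β i := by
        simp [hαβ, Finset.sum_add_distrib, ← Finset.mul_sum, hsum]
      exact_mod_cast this
    · simp only [hαβ, add_smul, mul_smul, Finset.sum_add_distrib, ← Finset.smul_sum, hcomb,
        smul_zero, add_zero]

theorem unique_reduced_representation_general
    (d : ℕ) (v : Fin (d + 2) → Fin d → ℤ)
    (hgen : AddSubgroup.closure (Set.range v - Set.range v) = ⊤)
    (lam : Fin (d + 2) → ℤ) (hne : lam ≠ 0)
    (hzero : ∑ i, lam i • liftZ (v i) = 0)
    (hcof : ∀ i, (lam i).natAbs =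
      (Matrix.det (Matrix.of fun r (c : Fin (d + 1)) => liftZ (v (i.succAbove c)) r)).natAbs)
    (h : ℕ) :
    (∀ x ∈ hFoldSumset (Set.range v) h,
      ∃! α : Fin (d + 2) → ℕ,
        (∑ i, α i = h ∧ ∑ i, (α i : ℤ) • v i = x ∧ ∃ i, 0 < lam i ∧ (α i : ℤ) < lam i)) ∧
    Nat.card (hFoldSumset (Set.range v) h)
      = Nat.card {α : Fin (d + 2) → ℕ |
          ∑ i, α i = h ∧ ∃ i, 0 < lam i ∧ (α i : ℤ) < lam i} := by
  obtain ⟨hsum, hcomb⟩ := (sum_smul_liftZ_eq_zero_iff lam v).1 hzero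
  obtain ⟨i, -, hi⟩ := Finset.exists_pos_of_sum_zero_of_exists_nonzero lam hsum
    (by simpa using Function.ne_iff.mp hne)
  have hker : ∀ μ : Fin (d + 2) → ℤ, ∑ i, μ i = 0 → ∑ i, μ i • v i = 0 → ∃ t : ℤ, μ = t • lam :=
    fun μ hμsum hμcomb => exists_eq_smul_of_sum_smul_eq_zero (fun i => liftZ (v i))
      (exists_sum_smul_liftZ_eq v hgen) hne hzero hcof
      ((sum_smul_liftZ_eq_zero_iff μ v).2 ⟨hμsum, hμcomb⟩)
  have hbij := bijOn_sum_smul_isReducedBy v ⟨i, hi⟩ hsum hcomb hker h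
  refine ⟨fun x hx => ?_, (Nat.card_congr (hbij.equiv _)).symm⟩
  obtain ⟨α, hα, rfl⟩ := hbij.surjOn hx
  exact ⟨α, ⟨hα.1, rfl, hα.2⟩, fun α' hα' => hbij.injOn ⟨hα'.1, hα'.2.2⟩ hα hα'.2.1⟩

theorem unique_reduced_representation
    (d : ℕ) (v : Fin (d + 2) → Fin d → ℤ) (hinj : Function.Injective v)
    (hgen : AddSubgroup.closure (Set.range v - Set.range v) = ⊤)
    (lam : Fin (d + 2) → ℤ) (hne : lam ≠ 0)
    (hzero : ∑ i, lam i • liftZ (v i) = 0)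
    (hcof : ∀ i, (lam i).natAbs =
      (Matrix.det (Matrix.of fun r (c : Fin (d + 1)) => liftZ (v (i.succAbove c)) r)).natAbs)
    (h : ℕ) :
    (∀ x ∈ hFoldSumset (Set.range v) h,
      ∃! α : Fin (d + 2) → ℕ,
        (∑ i, α i = h ∧ ∑ i, (α i : ℤ) • v i = x ∧ ∃ i, 0 < lam i ∧ (α i : ℤ) < lam i)) ∧
    Nat.card (hFoldSumset (Set.range v) h)
      = Nat.card {α : Fin (d + 2) → ℕ |
          ∑ i, α i = h ∧ ∃ i, 0 < lam i ∧ (α i : ℤ) < lam i} :=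
  unique_reduced_representation_general d v hgen lam hne hzero hcof h
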